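/- Let m be even and A be a matrix-based tensor corresponding to Â and odd exponent m-1. Then SOL(A, q) is finite for all q ∈ ℝⁿ if and only if SOL(Â, p) is finite for all p ∈ ℝⁿ. -/

import Mathlib

/-! For odd `r`, `t ↦ t ^ r` is an order isomorphism of `ℝ`, so `a ^ r + b ^ r` has the sign of
`a + b`. Complementarity only sees the signs of the entries of `F x`, hence
`SOL(A, p ^ [r]) = SOL(Â, p)`; as `p ↦ p ^ [r]` is onto, ranging over all `q` is ranging over all
`p ^ [r]`. -/

lemma Odd.pow_add_pow_nonneg_iff {R : Type*} [Ring R] [LinearOrder R] [IsStrictOrderedRing R]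
    {r : ℕ} (hr : Odd r) {a b : R} : 0 ≤ a ^ r + b ^ r ↔ 0 ≤ a + b := by
  rw [← neg_le_iff_add_nonneg', ← neg_le_iff_add_nonneg', ← hr.neg_pow, hr.pow_le_pow]

lemma Odd.pow_add_pow_eq_zero_iff {R : Type*} [Ring R] [LinearOrder R] [IsStrictOrderedRing R]
    {r : ℕ} (hr : Odd r) {a b : R} : a ^ r + b ^ r = 0 ↔ a + b = 0 := by
  rw [add_eq_zero_iff_eq_neg, add_eq_zero_iff_eq_neg, ← hr.neg_pow, hr.pow_inj]

lemma Real.pow_surjective_of_odd {r : ℕ} (hr : Odd r) : Function.Surjective fun a : ℝ => a ^ r := by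
  have hr0 : r ≠ 0 := by rintro rfl; exact Nat.not_odd_zero hr
  intro a
  rcases le_total 0 a with ha | ha
  · exact ⟨a ^ (r⁻¹ : ℝ), Real.rpow_inv_natCast_pow ha hr0⟩
  · refine ⟨-(-a) ^ (r⁻¹ : ℝ), ?_⟩
    dsimp only
    rw [hr.neg_pow, Real.rpow_inv_natCast_pow (neg_nonneg.mpr ha) hr0, neg_neg]

/-- `SOL(A, q)` and `SOL(Â, p)` are the sets for `F x = A x + q` and `F x = Â x + p`. -/
def complementaritySet {ι : Type*} [Fintype ι] (F : (ι → ℝ) → ι → ℝ) : Set (ι → ℝ) :=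
  {x | (∀ i, 0 ≤ x i) ∧ (∀ i, 0 ≤ F x i) ∧ ∑ i, x i * F x i = 0}

section complementaritySet

variable {ι : Type*} [Fintype ι]

lemma mem_complementaritySet_iff {F : (ι → ℝ) → ι → ℝ} {x : ι → ℝ} :
    x ∈ complementaritySet F ↔ ∀ i, 0 ≤ x i ∧ 0 ≤ F x i ∧ (x i = 0 ∨ F x i = 0) := by
  simp only [complementaritySet, Set.mem_ofPred_eq]
  constructor
  · rintro ⟨hx, hF, hsum⟩ i
    have hterm := (Finset.sum_eq_zero_iff_of_nonneg fun j _ => mul_nonneg (hx j) (hF j)).mp hsum i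
      (Finset.mem_univ i)
    exact ⟨hx i, hF i, mul_eq_zero.mp hterm⟩
  · intro h
    refine ⟨fun i => (h i).1, fun i => (h i).2.1, Finset.sum_eq_zero fun i _ => ?_⟩
    exact mul_eq_zero.mpr (h i).2.2

lemma complementaritySet_congr {F G : (ι → ℝ) → ι → ℝ}
    (hnonneg : ∀ x i, 0 ≤ F x i ↔ 0 ≤ G x i) (hzero : ∀ x i, F x i = 0 ↔ G x i = 0) :
    complementaritySet F = complementaritySet G := by
  ext x
  simp only [mem_complementaritySet_iff, hnonneg, hzero]

lemma complementaritySet_pow_add_pow {r : ℕ} (hr : Odd r) (F : (ι → ℝ) → ι → ℝ) (p : ι → ℝ) :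
    complementaritySet (fun x i => F x i ^ r + p i ^ r) =
      complementaritySet (fun x i => F x i + p i) :=
  complementaritySet_congr (fun _ _ => hr.pow_add_pow_nonneg_iff)
    (fun _ _ => hr.pow_add_pow_eq_zero_iff)

end complementaritySet

/-- For a matrix-based tensor `A` of even order `m` with `A x^{m-1} = (Â x)^{[m-1]}`:
`SOL(A,q)` is finite for all `q` iff `SOL(Â,p)` is finite for all `p`. -/
theorem matrixBased_finiteness_iff {n m : ℕ} (hm : 2 ≤ m) (hmeven : Even m)
    (Ahat : Matrix (Fin n) (Fin n) ℝ) (A : (Fin n → ℝ) → Fin n → ℝ)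
    (hA : ∀ x : Fin n → ℝ, ∀ i, A x i = (Ahat.mulVec x i) ^ (m - 1)) :
    (∀ q : Fin n → ℝ,
      Set.Finite {x : Fin n → ℝ | (∀ i, 0 ≤ x i) ∧ (∀ i, 0 ≤ A x i + q i) ∧
        ∑ i, x i * (A x i + q i) = 0}) ↔
    (∀ p : Fin n → ℝ,
      Set.Finite {x : Fin n → ℝ | (∀ i, 0 ≤ x i) ∧
        (∀ i, 0 ≤ Ahat.mulVec x i + p i) ∧
        ∑ i, x i * (Ahat.mulVec x i + p i) = 0}) := by
  have hr : Odd (m - 1) := Nat.Even.sub_odd (by omega) hmeven odd_one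
  obtain rfl : A = fun x i => Ahat.mulVec x i ^ (m - 1) := funext fun x => funext (hA x)
  have hpow : Function.Surjective fun p : Fin n → ℝ => fun i => p i ^ (m - 1) :=
    Function.Surjective.piMap fun _ => Real.pow_surjective_of_odd hr
  rw [hpow.forall]
  exact forall_congr' fun p => iff_of_eq <|
    congrArg Set.Finite (complementaritySet_pow_add_pow hr (fun x i => Ahat.mulVec x i) p)
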